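/- With the notation of the bipartite setting, assume each g_μ is continuous, let λ > 0, and let t ↦ U_t be the (unique) solution of the linear ODE dU_t/dt = (Z + λ A_t^{11}) ∘ U_t with U_0 = id, where A_t^{11} = P₁ ∘ A_t ∘ P₁. Then each U_t is invertible and for all 0 ≤ s ≤ t one has P₀ ∘ U_t ∘ U_s^{−1} = P₀ ∘ e^{(t−s)Z}. -/

import Mathlib

open Matrix Kronecker Complex
open scoped ComplexOrder

noncomputable section

attribute [local instance] Matrix.normedAddCommGroup Matrix.normedSpace

/-- Partial trace over the second (environment) tensor factor, as a linear map. -/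
def ptrEL (d m : ℕ) :
    Matrix (Fin d × Fin m) (Fin d × Fin m) ℂ →ₗ[ℂ] Matrix (Fin d) (Fin d) ℂ where
  toFun a := Matrix.of fun i j => ∑ k : Fin m, a (i, k) (j, k)
  map_add' a b := by ext i j; simp [Finset.sum_add_distrib]
  map_smul' c a := by ext i j; simp [Finset.mul_sum]

/-- Tensoring with a fixed environment state, as a linear map. -/
def kronR {d m : ℕ} (ρE : Matrix (Fin m) (Fin m) ℂ) :
    Matrix (Fin d) (Fin d) ℂ →ₗ[ℂ] Matrix (Fin d × Fin m) (Fin d × Fin m) ℂ where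
  toFun a := a ⊗ₖ ρE
  map_add' a b := Matrix.add_kronecker a b ρE
  map_smul' c a := Matrix.smul_kronecker c a ρE

/-- The projection `P₀(a) = (Tr_E a) ⊗ ρ_E`, as a continuous linear map. -/
def projP0L {d m : ℕ} (ρE : Matrix (Fin m) (Fin m) ℂ) :
    Matrix (Fin d × Fin m) (Fin d × Fin m) ℂ →L[ℂ] Matrix (Fin d × Fin m) (Fin d × Fin m) ℂ :=
  LinearMap.toContinuousLinearMap ((kronR ρE).comp (ptrEL d m))

/-- The commutator derivation `x ↦ −i[B, x]`, as a continuous linear map. -/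
def adL {n : Type*} [Fintype n] [DecidableEq n] (B : Matrix n n ℂ) :
    Matrix n n ℂ →L[ℂ] Matrix n n ℂ :=
  LinearMap.toContinuousLinearMap
    ((-Complex.I) • (LinearMap.mulLeft ℂ B - LinearMap.mulRight ℂ B))

/-- The interaction derivation `A_t = −i[Σ_μ g_μ(t) S_μ ⊗ R_μ, ·]`. -/
def intDerL {d m : ℕ} {ι : Type*} [Fintype ι]
    (S : ι → Matrix (Fin d) (Fin d) ℂ) (R : ι → Matrix (Fin m) (Fin m) ℂ)
    (g : ι → ℝ → ℂ) (t : ℝ) :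
    Matrix (Fin d × Fin m) (Fin d × Fin m) ℂ →L[ℂ] Matrix (Fin d × Fin m) (Fin d × Fin m) ℂ :=
  adL (∑ μ, g μ t • (S μ ⊗ₖ R μ))

/-- Helper (port): `ContinuousSMul ℝ` on the ℂ-linear operators on matrices, which instance
search no longer finds. It is a `Prop`, so it does not change the statement. -/
instance contSMulRealMatCLM {n : Type*} [Fintype n] :
    ContinuousSMul ℝ (Matrix n n ℂ →L[ℂ] Matrix n n ℂ) := by
  let _ : NormedAddCommGroup (Matrix n n ℂ →L[ℂ] Matrix n n ℂ) :=
    ContinuousLinearMap.toNormedAddCommGroup (σ₁₂ := RingHom.id ℂ)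
  let _ : NormedSpace ℝ (Matrix n n ℂ →L[ℂ] Matrix n n ℂ) := ContinuousLinearMap.toNormedSpace
  exact NormedSpace.toIsBoundedSMul.continuousSMul

/-- Helper (port): `IsTopologicalRing` on the ℂ-linear operators on matrices, needed by
`NormedSpace.exp`, which instance search no longer finds. A `Prop`, so harmless. -/
instance topRingMatCLM {n : Type*} [Fintype n] :
    IsTopologicalRing (Matrix n n ℂ →L[ℂ] Matrix n n ℂ) := by
  let N : NormedRing (Matrix n n ℂ →L[ℂ] Matrix n n ℂ) := ContinuousLinearMap.toNormedRing
  exact @NonUnitalSeminormedRing.toIsTopologicalRing _ N.toSeminormedRing.toNonUnitalSeminormedRing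

/-! Since `P₀ P₁ = 0`, the generator satisfies `P₀ (Z + λ A¹¹_t) = P₀ Z`, and since the partial
trace intertwines `Z` with `−i[H, ·]`, also `P₀ Z P₀ = P₀ Z`. Hence
`Y_t = P₀ (U_t U_s⁻¹ − e^{(t−s)Z})` solves the linear ODE `Y' = (P₀ Z) Y` with `Y_s = 0`, so it
vanishes by uniqueness of solutions. The same uniqueness, applied to `t ↦ U_t w` with
`U_{t₀} w = 0`, gives `w = U_0 w = 0`, so each `U_t` is injective and hence invertible. -/

section LinearODE

theorem linear_ODE_solution_eq_zero {F : Type*} [NormedAddCommGroup F] [NormedSpace ℝ F]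
    {L : ℝ → F →L[ℝ] F} (hL : Continuous L) {f : ℝ → F}
    (hf : ∀ t, HasDerivAt f (L t (f t)) t) {t₀ : ℝ} (hf₀ : f t₀ = 0) (t : ℝ) : f t = 0 := by
  set a := min t₀ t - 1
  set b := max t₀ t + 1
  obtain ⟨C, hC⟩ := (isCompact_Icc (a := a) (b := b)).exists_bound_of_continuousOn hL.continuousOn
  have hlip (r : ℝ) (hr : r ∈ Set.Ioo a b) : LipschitzOnWith C.toNNReal (L r) Set.univ :=
    (ContinuousLinearMap.lipschitzWith_of_opNorm_le
      ((hC r (Set.Ioo_subset_Icc_self hr)).trans (Real.le_coe_toNNReal C))).lipschitzOnWith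
  have hzero (r : ℝ) : HasDerivAt (fun _ ↦ (0 : F)) (L r 0) r := by
    simpa using hasDerivAt_const r (0 : F)
  exact ODE_solution_unique_of_mem_Icc hlip (g := fun _ ↦ 0)
    ⟨by linarith [min_le_left t₀ t], by linarith [le_max_left t₀ t]⟩
    (continuous_iff_continuousAt.2 fun r ↦ (hf r).continuousAt).continuousOn
    (fun r _ ↦ hf r) (fun _ _ ↦ trivial) continuousOn_const (fun r _ ↦ hzero r)
    (fun _ _ ↦ trivial) hf₀ ⟨by linarith [min_le_right t₀ t], by linarith [le_max_right t₀ t]⟩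

theorem mul_mul_inverse_eq_mul_exp {𝔸 : Type*} [NormedRing 𝔸] [NormedAlgebra ℝ 𝔸]
    [CompleteSpace 𝔸] {P Z : 𝔸} {L U : ℝ → 𝔸} (hU : ∀ t, HasDerivAt U (L t * U t) t)
    (hPL : ∀ t, P * L t = P * Z) (hPZ : P * Z * P = P * Z) {s : ℝ} (hs : IsUnit (U s))
    (t : ℝ) : P * (U t * Ring.inverse (U s)) = P * NormedSpace.exp ((t - s) • Z) := by
  set Y : ℝ → 𝔸 := fun t ↦ P * (U t * Ring.inverse (U s)) - P * NormedSpace.exp ((t - s) • Z)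
  have hY (r : ℝ) : HasDerivAt Y (ContinuousLinearMap.mul ℝ 𝔸 (P * Z) (Y r)) r := by
    have hexp : HasDerivAt (fun r ↦ NormedSpace.exp ((r - s) • Z))
        (Z * NormedSpace.exp ((r - s) • Z)) r :=
      (hasDerivAt_exp_smul_const' Z (r - s)).comp_sub_const r s
    refine ((((hU r).mul_const (Ring.inverse (U s))).const_mul P).sub
      (hexp.const_mul P)).congr_deriv ?_
    simp only [Y, ContinuousLinearMap.mul_apply', mul_sub, ← mul_assoc, hPZ, hPL]
  have hYs : Y s = 0 := by simp [Y, Ring.mul_inverse_cancel _ hs]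
  exact sub_eq_zero.1 (linear_ODE_solution_eq_zero continuous_const hY hYs t)

variable {𝕜 E : Type*} [RCLike 𝕜] [NormedAddCommGroup E] [NormedSpace 𝕜 E] [NormedSpace ℝ E]
  [IsScalarTower ℝ 𝕜 E] [FiniteDimensional 𝕜 E]

theorem isUnit_of_linear_ODE {L U : ℝ → E →L[𝕜] E} (hL : Continuous L) (hU₀ : U 0 = 1)
    (hU : ∀ t, HasDerivAt U (L t * U t) t) (t : ℝ) : IsUnit (U t) := by
  have := FiniteDimensional.complete 𝕜 E
  have hker (w : E) (hw : U t w = 0) : w = 0 := by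
    have hLℝ : Continuous fun r ↦ (L r).restrictScalars ℝ :=
      (ContinuousLinearMap.restrictScalarsL 𝕜 E E ℝ ℝ).continuous.comp hL
    have hUw (r : ℝ) : HasDerivAt (fun r ↦ U r w) ((L r).restrictScalars ℝ (U r w)) r :=
      ((ContinuousLinearMap.apply 𝕜 E w).restrictScalars ℝ).hasFDerivAt.comp_hasDerivAt r (hU r)
    simpa [hU₀] using linear_ODE_solution_eq_zero hLℝ hUw hw 0
  have hinj : Function.Injective (U t) := (injective_iff_map_eq_zero _).2 hker
  exact ContinuousLinearMap.isUnit_iff_bijective.2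
    ⟨hinj, (LinearMap.injective_iff_surjective (f := (U t : E →ₗ[𝕜] E))).1 hinj⟩

theorem ContinuousLinearMap.mul_mul_inverse_eq_mul_exp {P Z : E →L[𝕜] E} {L U : ℝ → E →L[𝕜] E}
    (hU : ∀ t, HasDerivAt U (L t * U t) t) (hPL : ∀ t, P * L t = P * Z)
    (hPZ : P * Z * P = P * Z) {s : ℝ} (hs : IsUnit (U s)) (t : ℝ) :
    P * (U t * Ring.inverse (U s)) = P * NormedSpace.exp ((t - s) • Z) := by
  have := FiniteDimensional.complete 𝕜 E
  -- Mathlib only provides `NormedAlgebra 𝕜 (E →L[𝕜] E)`; the real one is needed for `exp (t • Z)`.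
  let _ : NormedAlgebra ℝ (E →L[𝕜] E) := { norm_smul_le := ContinuousLinearMap.opNorm_smul_le }
  exact _root_.mul_mul_inverse_eq_mul_exp hU hPL hPZ hs t

end LinearODE

section PartialTrace

variable {d m : ℕ}

theorem ptrEL_kronecker (a : Matrix (Fin d) (Fin d) ℂ) (b : Matrix (Fin m) (Fin m) ℂ) :
    ptrEL d m (a ⊗ₖ b) = b.trace • a := by
  ext i j
  simp [ptrEL, Matrix.trace, Finset.mul_sum, mul_comm]

theorem ptrEL_kronecker_one_mul (H : Matrix (Fin d) (Fin d) ℂ)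
    (x : Matrix (Fin d × Fin m) (Fin d × Fin m) ℂ) :
    ptrEL d m ((H ⊗ₖ (1 : Matrix (Fin m) (Fin m) ℂ)) * x) = H * ptrEL d m x := by
  ext i j
  simp only [ptrEL, LinearMap.coe_mk, AddHom.coe_mk, Matrix.mul_apply, kroneckerMap_apply,
    Matrix.one_apply, mul_ite, mul_one, mul_zero, ite_mul, zero_mul, Fintype.sum_prod_type,
    Finset.sum_ite_eq, Finset.mem_univ, ↓reduceIte, of_apply, Finset.mul_sum]
  exact Finset.sum_comm

theorem ptrEL_mul_kronecker_one (H : Matrix (Fin d) (Fin d) ℂ)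
    (x : Matrix (Fin d × Fin m) (Fin d × Fin m) ℂ) :
    ptrEL d m (x * (H ⊗ₖ (1 : Matrix (Fin m) (Fin m) ℂ))) = ptrEL d m x * H := by
  ext i j
  simp only [ptrEL, LinearMap.coe_mk, AddHom.coe_mk, Matrix.mul_apply, kroneckerMap_apply,
    Matrix.one_apply, mul_ite, mul_one, mul_zero, Fintype.sum_prod_type, Finset.sum_ite_eq',
    Finset.mem_univ, ↓reduceIte, of_apply, Finset.sum_mul]
  exact Finset.sum_comm

theorem ptrEL_one_kronecker_mul (HE : Matrix (Fin m) (Fin m) ℂ)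
    (x : Matrix (Fin d × Fin m) (Fin d × Fin m) ℂ) :
    ptrEL d m (((1 : Matrix (Fin d) (Fin d) ℂ) ⊗ₖ HE) * x) =
      ptrEL d m (x * ((1 : Matrix (Fin d) (Fin d) ℂ) ⊗ₖ HE)) := by
  ext i j
  simp only [ptrEL, LinearMap.coe_mk, AddHom.coe_mk, Matrix.mul_apply, kroneckerMap_apply,
    Matrix.one_apply, ite_mul, one_mul, zero_mul, Fintype.sum_prod_type, Finset.sum_ite_irrel,
    Finset.sum_const_zero, Finset.sum_ite_eq, Finset.mem_univ, ↓reduceIte, of_apply, mul_ite,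
    mul_zero, Finset.sum_ite_eq']
  rw [Finset.sum_comm]
  simp [mul_comm]

theorem ptrEL_adL_kroneckerSum (H : Matrix (Fin d) (Fin d) ℂ) (HE : Matrix (Fin m) (Fin m) ℂ)
    (x : Matrix (Fin d × Fin m) (Fin d × Fin m) ℂ) :
    ptrEL d m (adL (H ⊗ₖ (1 : Matrix (Fin m) (Fin m) ℂ) +
      (1 : Matrix (Fin d) (Fin d) ℂ) ⊗ₖ HE) x) = adL H (ptrEL d m x) := by
  change ptrEL d m ((-Complex.I) • (_ * x - x * _)) = (-Complex.I) • (H * _ - _ * H)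
  rw [map_smul, map_sub, add_mul, mul_add, map_add, map_add, ptrEL_kronecker_one_mul,
    ptrEL_mul_kronecker_one, ptrEL_one_kronecker_mul]
  abel_nf

theorem ptrEL_projP0L {ρE : Matrix (Fin m) (Fin m) ℂ} (hρE : ρE.trace = 1)
    (x : Matrix (Fin d × Fin m) (Fin d × Fin m) ℂ) : ptrEL d m (projP0L ρE x) = ptrEL d m x := by
  change ptrEL d m (ptrEL d m x ⊗ₖ ρE) = _
  rw [ptrEL_kronecker, hρE, one_smul]

theorem projP0L_mul_self {ρE : Matrix (Fin m) (Fin m) ℂ} (hρE : ρE.trace = 1) :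
    projP0L (d := d) ρE * projP0L ρE = projP0L ρE := by
  ext x : 1
  exact congrArg (· ⊗ₖ ρE) (ptrEL_projP0L hρE x)

theorem projP0L_mul_adL_mul_projP0L {ρE : Matrix (Fin m) (Fin m) ℂ} (hρE : ρE.trace = 1)
    (H : Matrix (Fin d) (Fin d) ℂ) (HE : Matrix (Fin m) (Fin m) ℂ) :
    projP0L ρE * adL (H ⊗ₖ (1 : Matrix (Fin m) (Fin m) ℂ) +
      (1 : Matrix (Fin d) (Fin d) ℂ) ⊗ₖ HE) * projP0L ρE =
    projP0L ρE * adL (H ⊗ₖ (1 : Matrix (Fin m) (Fin m) ℂ) +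
      (1 : Matrix (Fin d) (Fin d) ℂ) ⊗ₖ HE) := by
  ext x : 1
  change ptrEL d m (adL _ (projP0L ρE x)) ⊗ₖ ρE = ptrEL d m (adL _ x) ⊗ₖ ρE
  rw [ptrEL_adL_kroneckerSum, ptrEL_adL_kroneckerSum, ptrEL_projP0L hρE]

end PartialTrace

theorem continuous_adL {n : Type*} [Fintype n] [DecidableEq n] :
    Continuous (adL : Matrix n n ℂ → _) :=
  let adLₗ : Matrix n n ℂ →ₗ[ℂ] Matrix n n ℂ →L[ℂ] Matrix n n ℂ :=
    LinearMap.toContinuousLinearMap.toLinearMap ∘ₗ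
      ((-Complex.I) • (LinearMap.mul ℂ (Matrix n n ℂ) - (LinearMap.mul ℂ (Matrix n n ℂ)).flip))
  adLₗ.continuous_of_finiteDimensional

theorem continuous_intDerL {d m : ℕ} {ι : Type*} [Fintype ι] (S : ι → Matrix (Fin d) (Fin d) ℂ)
    (R : ι → Matrix (Fin m) (Fin m) ℂ) {g : ι → ℝ → ℂ} (hg : ∀ μ, Continuous (g μ)) :
    Continuous (intDerL S R g) :=
  continuous_adL.comp (continuous_finsetSum _ fun μ _ ↦ (hg μ).smul continuous_const)

theorem stmt2 {d m : ℕ} {ι : Type*} [Fintype ι]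
    (ρE : Matrix (Fin m) (Fin m) ℂ) (hρEtr : ρE.trace = 1)
    (H : Matrix (Fin d) (Fin d) ℂ)
    (HE : Matrix (Fin m) (Fin m) ℂ)
    (S : ι → Matrix (Fin d) (Fin d) ℂ) (R : ι → Matrix (Fin m) (Fin m) ℂ)
    (g : ι → ℝ → ℂ) (hg : ∀ μ, Continuous (g μ))
    (lam : ℝ)
    (Z P0 P1 : Matrix (Fin d × Fin m) (Fin d × Fin m) ℂ →L[ℂ]
        Matrix (Fin d × Fin m) (Fin d × Fin m) ℂ)
    (hZ : Z = adL (H ⊗ₖ (1 : Matrix (Fin m) (Fin m) ℂ) +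
                   (1 : Matrix (Fin d) (Fin d) ℂ) ⊗ₖ HE))
    (hP0 : P0 = projP0L ρE) (hP1 : P1 = 1 - P0)
    (U : ℝ → (Matrix (Fin d × Fin m) (Fin d × Fin m) ℂ →L[ℂ]
        Matrix (Fin d × Fin m) (Fin d × Fin m) ℂ))
    (hU0 : U 0 = 1)
    (hU : ∀ t : ℝ, HasDerivAt U
        ((Z + lam • (P1.comp ((intDerL S R g t).comp P1))) * U t) t) :
    (∀ t : ℝ, IsUnit (U t)) ∧
    ∀ s t : ℝ, 0 ≤ s → s ≤ t →
      P0.comp (U t * Ring.inverse (U s)) =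
        P0.comp (NormedSpace.exp ((t - s) • Z)) := by
  have hP0P1 (x : Matrix (Fin d × Fin m) (Fin d × Fin m) ℂ) : P0 (P1 x) = 0 :=
    ContinuousLinearMap.ext_iff.1 (show P0 * P1 = 0 by
      rw [hP1, mul_sub, mul_one, hP0, projP0L_mul_self hρEtr, sub_self]) x
  have hP0L (t : ℝ) : P0 * (Z + lam • P1.comp ((intDerL S R g t).comp P1)) = P0 * Z := by
    ext x : 1
    change P0 (Z x + lam • P1 _) = P0 (Z x)
    rw [map_add, P0.map_smul_of_tower, hP0P1, smul_zero, add_zero]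
  have hP0Z : P0 * Z * P0 = P0 * Z := by rw [hP0, hZ]; exact projP0L_mul_adL_mul_projP0L hρEtr H HE
  have hunit := isUnit_of_linear_ODE (by have := continuous_intDerL S R hg; fun_prop) hU0 hU
  exact ⟨hunit, fun s t _ _ ↦ ContinuousLinearMap.mul_mul_inverse_eq_mul_exp hU hP0L hP0Z (hunit s) t⟩
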